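/- arXiv:2309.12062 — 5 statements merged into one kernel-verified Lean document; each statement's English description precedes it below -/
import Mathlib

section
/- Let K, λ ∈ ℝ, let I ⊆ ℝ be an open interval, and let f : I → ℝ be a continuous function which is a subsolution of f'' − K f = λ in the sense of Jensen. Then for every t₀ ∈ I there exist c > 0 and a neighbourhood of t₀ in I on which the function t ↦ f(t) + c t² is convex. In particular, f is locally Lipschitz on I, possesses one-sided derivatives at every point of I, and these satisfy f'(t⁻) ≤ f'(t⁺) at each t ∈ I. -/
open Set MeasureTheory

/-- `x < D_K`, where `D_K := π/√(-K)` if `K < 0` and `D_K := ∞` if `K ≥ 0`. -/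
def LtDK (K x : ℝ) : Prop := K < 0 → x < Real.pi / Real.sqrt (-K)

/-- `x ≤ D_K`, where `D_K := π/√(-K)` if `K < 0` and `D_K := ∞` if `K ≥ 0`. -/
def LeDK (K x : ℝ) : Prop := K < 0 → x ≤ Real.pi / Real.sqrt (-K)

/-- `g : ℝ → ℝ` is a twice differentiable solution of `g'' - K g = lam` (on all of `ℝ`). -/
def IsSol (K lam : ℝ) (g : ℝ → ℝ) : Prop :=
  Differentiable ℝ g ∧ ∀ t, HasDerivAt (deriv g) (K * g t + lam) t

/-- `g` is a twice differentiable solution of `g'' - K g = lam` on the set `s`. -/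
def IsSolOn (K lam : ℝ) (g : ℝ → ℝ) (s : Set ℝ) : Prop :=
  ∀ t ∈ s, DifferentiableAt ℝ g t ∧ HasDerivAt (deriv g) (K * g t + lam) t

/-- `f` is a subsolution of `f'' - K f = lam` in the sense of Jensen on `s`:
for all `t₁ < t₂` in `s` with `t₂ - t₁ < D_K`, the (unique) solution `g` of the ODE
with `g t₁ = f t₁` and `g t₂ = f t₂` satisfies `f ≤ g` on `[t₁, t₂]`. -/
def JensenSub (K lam : ℝ) (f : ℝ → ℝ) (s : Set ℝ) : Prop :=
  ∀ t₁ ∈ s, ∀ t₂ ∈ s, t₁ < t₂ → LtDK K (t₂ - t₁) →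
    ∀ g : ℝ → ℝ, IsSol K lam g → g t₁ = f t₁ → g t₂ = f t₂ →
      ∀ t ∈ Set.Icc t₁ t₂, f t ≤ g t

/-- `f` is a supersolution of `f'' - K f = lam` in the sense of Jensen on `s`. -/
def JensenSuper (K lam : ℝ) (f : ℝ → ℝ) (s : Set ℝ) : Prop :=
  ∀ t₁ ∈ s, ∀ t₂ ∈ s, t₁ < t₂ → LtDK K (t₂ - t₁) →
    ∀ g : ℝ → ℝ, IsSol K lam g → g t₁ = f t₁ → g t₂ = f t₂ →
      ∀ t ∈ Set.Icc t₁ t₂, g t ≤ f t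

/-- `f` is a distributional subsolution of `f'' - K f ≥ lam` on `I`. -/
def DistribSub (K lam : ℝ) (f : ℝ → ℝ) (I : Set ℝ) : Prop :=
  ∀ φ : ℝ → ℝ, ContDiff ℝ (⊤ : ℕ∞) φ → HasCompactSupport φ → tsupport φ ⊆ I →
    (∀ x, 0 ≤ φ x) →
    0 ≤ ∫ t in I, (f t * deriv (deriv φ) t - K * f t * φ t - lam * φ t)

/-- `f` is a distributional supersolution of `f'' - K f ≤ lam` on `I`. -/
def DistribSuper (K lam : ℝ) (f : ℝ → ℝ) (I : Set ℝ) : Prop :=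
  ∀ φ : ℝ → ℝ, ContDiff ℝ (⊤ : ℕ∞) φ → HasCompactSupport φ → tsupport φ ⊆ I →
    (∀ x, 0 ≤ φ x) →
    (∫ t in I, (f t * deriv (deriv φ) t - K * f t * φ t - lam * φ t)) ≤ 0

/-- `f` satisfies the Jensen subsolution inequality for the parameters `(t₁, t₂, t₃)`:
`f t₂ ≤ g t₂` for the (unique) solution `g` of `g'' - K g = lam`
with `g t₁ = f t₁` and `g t₃ = f t₃`. -/
def JensenSubIneq (K lam : ℝ) (f : ℝ → ℝ) (t₁ t₂ t₃ : ℝ) : Prop :=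
  ∀ g : ℝ → ℝ, IsSol K lam g → g t₁ = f t₁ → g t₃ = f t₃ → f t₂ ≤ g t₂

/-- `f` satisfies the Jensen supersolution inequality for the parameters `(t₁, t₂, t₃)`. -/
def JensenSuperIneq (K lam : ℝ) (f : ℝ → ℝ) (t₁ t₂ t₃ : ℝ) : Prop :=
  ∀ g : ℝ → ℝ, IsSol K lam g → g t₁ = f t₁ → g t₃ = f t₃ → g t₂ ≤ f t₂

noncomputable def cK (K t : ℝ) : ℝ :=
  if K < 0 then Real.cos (Real.sqrt (-K) * t) else Real.cosh (Real.sqrt K * t)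

noncomputable def sK (K t : ℝ) : ℝ :=
  if K < 0 then Real.sin (Real.sqrt (-K) * t) / Real.sqrt (-K)
  else if 0 < K then Real.sinh (Real.sqrt K * t) / Real.sqrt K else t

noncomputable def qK (K lam t : ℝ) : ℝ :=
  if K = 0 then lam * t ^ 2 / 2 else lam / K * (cK K t - 1)

lemma cK_zero (K : ℝ) : cK K 0 = 1 := by
  unfold cK; split <;> simp

lemma sK_zero (K : ℝ) : sK K 0 = 0 := by
  unfold sK; split
  · simp
  · split <;> simp

lemma qK_zero (K lam : ℝ) : qK K lam 0 = 0 := by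
  unfold qK; split
  · simp
  · simp [cK_zero]

lemma hasDerivAt_cK (K t : ℝ) : HasDerivAt (cK K) (K * sK K t) t := by
  unfold cK sK
  rcases lt_trichotomy K 0 with hK | hK | hK
  · simp only [if_pos hK]
    have h0 : (0:ℝ) < Real.sqrt (-K) := Real.sqrt_pos.2 (by linarith)
    have h := (Real.hasDerivAt_cos (Real.sqrt (-K) * t)).comp t
      ((hasDerivAt_id t).const_mul (Real.sqrt (-K)))
    refine h.congr_deriv (Eq.symm ?_)
    have hsq : Real.sqrt (-K) ^ 2 = -K := Real.sq_sqrt (by linarith)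
    field_simp
    linear_combination (Real.sin (Real.sqrt (-K) * t)) * hsq
  · subst hK
    simp only [lt_irrefl, if_neg (lt_irrefl (0:ℝ))]
    simp
    exact hasDerivAt_const t 1
  · simp only [if_neg (not_lt.2 hK.le), if_pos hK]
    have h0 : (0:ℝ) < Real.sqrt K := Real.sqrt_pos.2 hK
    have h := (Real.hasDerivAt_cosh (Real.sqrt K * t)).comp t
      ((hasDerivAt_id t).const_mul (Real.sqrt K))
    refine h.congr_deriv (Eq.symm ?_)
    have hsq : Real.sqrt K ^ 2 = K := Real.sq_sqrt hK.le
    field_simp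
    linear_combination (-Real.sinh (Real.sqrt K * t)) * hsq

lemma hasDerivAt_sK (K t : ℝ) : HasDerivAt (sK K) (cK K t) t := by
  unfold cK sK
  rcases lt_trichotomy K 0 with hK | hK | hK
  · simp only [if_pos hK]
    have h0 : (0:ℝ) < Real.sqrt (-K) := Real.sqrt_pos.2 (by linarith)
    have h := ((Real.hasDerivAt_sin (Real.sqrt (-K) * t)).comp t
      ((hasDerivAt_id t).const_mul (Real.sqrt (-K)))).div_const (Real.sqrt (-K))
    refine h.congr_deriv (Eq.symm ?_)
    field_simp
  · subst hK
    simp only [lt_irrefl, if_neg (lt_irrefl (0:ℝ))]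
    exact (hasDerivAt_id t).congr_deriv (by simp)
  · simp only [if_neg (not_lt.2 hK.le), if_pos hK]
    have h0 : (0:ℝ) < Real.sqrt K := Real.sqrt_pos.2 hK
    have h := ((Real.hasDerivAt_sinh (Real.sqrt K * t)).comp t
      ((hasDerivAt_id t).const_mul (Real.sqrt K))).div_const (Real.sqrt K)
    refine h.congr_deriv (Eq.symm ?_)
    field_simp

lemma hasDerivAt_qK (K lam t : ℝ) : HasDerivAt (qK K lam) (lam * sK K t) t := by
  unfold qK
  rcases eq_or_ne K 0 with hK | hK
  · subst hK
    simp only [if_pos rfl]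
    have h : HasDerivAt (fun t : ℝ => lam * t ^ 2 / 2) (lam * t) t := by
      have := ((hasDerivAt_pow 2 t).const_mul lam).div_const 2
      refine this.congr_deriv (Eq.symm ?_)
      ring
    refine h.congr_deriv (Eq.symm ?_)
    unfold sK
    norm_num
  · simp only [if_neg hK]
    have h := ((hasDerivAt_cK K t).sub_const 1).const_mul (lam / K)
    refine h.congr_deriv (Eq.symm ?_)
    field_simp

lemma lam_cK_eq (K lam t : ℝ) : lam * cK K t = K * qK K lam t + lam := by
  unfold qK
  rcases eq_or_ne K 0 with hK | hK
  · subst hK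
    simp only [if_pos rfl]
    unfold cK
    simp
  · simp only [if_neg hK]
    field_simp
    ring

lemma sK_pos {K d : ℝ} (hd : 0 < d) (hDK : LtDK K d) : 0 < sK K d := by
  unfold sK
  rcases lt_trichotomy K 0 with hK | hK | hK
  · simp only [if_pos hK]
    have h0 : (0:ℝ) < Real.sqrt (-K) := Real.sqrt_pos.2 (by linarith)
    have hlt := hDK hK
    apply div_pos _ h0
    apply Real.sin_pos_of_pos_of_lt_pi (by positivity)
    calc Real.sqrt (-K) * d < Real.sqrt (-K) * (Real.pi / Real.sqrt (-K)) := by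
          exact mul_lt_mul_of_pos_left hlt h0
      _ = Real.pi := by field_simp
  · subst hK
    simpa using hd
  · simp only [if_neg (not_lt.2 hK.le), if_pos hK]
    have h0 : (0:ℝ) < Real.sqrt K := Real.sqrt_pos.2 hK
    exact div_pos (by positivity) h0

lemma sK_nonneg {K u L : ℝ} (hu : 0 ≤ u) (huL : u ≤ L)
    (hL : K < 0 → Real.sqrt (-K) * L ≤ Real.pi / 2) : 0 ≤ sK K u := by
  unfold sK
  rcases lt_trichotomy K 0 with hK | hK | hK
  · simp only [if_pos hK]
    have h0 : (0:ℝ) < Real.sqrt (-K) := Real.sqrt_pos.2 (by linarith)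
    apply div_nonneg _ h0.le
    apply Real.sin_nonneg_of_nonneg_of_le_pi (by positivity)
    have := hL hK
    nlinarith [Real.pi_pos, mul_le_mul_of_nonneg_left huL h0.le]
  · subst hK; simpa using hu
  · simp only [if_neg (not_lt.2 hK.le), if_pos hK]
    have h0 : (0:ℝ) < Real.sqrt K := Real.sqrt_pos.2 hK
    exact div_nonneg (by positivity) h0.le

lemma sK_le_sK {K u d L : ℝ} (hu : 0 ≤ u) (hud : u ≤ d) (hdL : d ≤ L)
    (hL : K < 0 → Real.sqrt (-K) * L ≤ Real.pi / 2) : sK K u ≤ sK K d := by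
  unfold sK
  rcases lt_trichotomy K 0 with hK | hK | hK
  · simp only [if_pos hK]
    have h0 : (0:ℝ) < Real.sqrt (-K) := Real.sqrt_pos.2 (by linarith)
    have hL' := hL hK
    have h1 : Real.sqrt (-K) * u ≤ Real.sqrt (-K) * d :=
      mul_le_mul_of_nonneg_left hud h0.le
    have h2 : Real.sqrt (-K) * d ≤ Real.pi / 2 := by
      nlinarith [mul_le_mul_of_nonneg_left hdL h0.le]
    have h3 : -(Real.pi / 2) ≤ Real.sqrt (-K) * u := by
      have : (0:ℝ) ≤ Real.sqrt (-K) * u := by positivity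
      linarith [Real.pi_pos]
    have := Real.sin_le_sin_of_le_of_le_pi_div_two h3 h2 h1
    exact (div_le_div_iff_of_pos_right h0).2 this
  · subst hK; simpa using hud
  · simp only [if_neg (not_lt.2 hK.le), if_pos hK]
    have h0 : (0:ℝ) < Real.sqrt K := Real.sqrt_pos.2 hK
    have : Real.sinh (Real.sqrt K * u) ≤ Real.sinh (Real.sqrt K * d) :=
      Real.sinh_le_sinh.2 (mul_le_mul_of_nonneg_left hud h0.le)
    exact (div_le_div_iff_of_pos_right h0).2 this

lemma cK_abs_le {K u L : ℝ} (hu : |u| ≤ L) :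
    |cK K u| ≤ Real.cosh (Real.sqrt |K| * L) := by
  have hL : 0 ≤ L := (abs_nonneg u).trans hu
  unfold cK
  rcases lt_or_ge K 0 with hK | hK
  · simp only [if_pos hK]
    exact (Real.abs_cos_le_one _).trans (Real.one_le_cosh _)
  · simp only [if_neg (not_lt.2 hK)]
    rw [abs_of_nonneg (Real.cosh_pos _).le, abs_of_nonneg hK]
    rw [Real.cosh_le_cosh]
    rw [abs_of_nonneg (by positivity : (0:ℝ) ≤ Real.sqrt K * L)]
    rw [abs_mul, abs_of_nonneg (Real.sqrt_nonneg K)]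
    exact mul_le_mul_of_nonneg_left hu (Real.sqrt_nonneg K)

noncomputable def Qb (K lam L : ℝ) : ℝ :=
  if K = 0 then |lam| * L ^ 2 / 2
  else |lam| / |K| * (Real.cosh (Real.sqrt |K| * L) + 1)

lemma Qb_nonneg (K lam L : ℝ) : 0 ≤ Qb K lam L := by
  unfold Qb
  split
  · positivity
  · have := (Real.cosh_pos (x := Real.sqrt |K| * L)).le
    positivity

lemma qK_abs_le {K lam u L : ℝ} (hu : |u| ≤ L) : |qK K lam u| ≤ Qb K lam L := by
  have hL : 0 ≤ L := (abs_nonneg u).trans hu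
  unfold qK Qb
  rcases eq_or_ne K 0 with hK | hK
  · simp only [if_pos hK]
    rw [abs_div, abs_mul, abs_of_nonneg (by norm_num : (0:ℝ) ≤ (2:ℝ))]
    apply div_le_div_of_nonneg_right ?_ (by norm_num)
    apply mul_le_mul_of_nonneg_left ?_ (abs_nonneg lam)
    rw [abs_pow]
    exact pow_le_pow_left₀ (abs_nonneg u) hu 2
  · simp only [if_neg hK]
    rw [abs_mul, abs_div]
    apply mul_le_mul (le_refl _) ?_ (abs_nonneg _) (by positivity)
    calc |cK K u - 1| ≤ |cK K u| + 1 := by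
          have := abs_sub_abs_le_abs_sub (cK K u) 1
          have h := abs_sub (cK K u) 1
          calc |cK K u - 1| ≤ |cK K u| + |(1:ℝ)| := abs_sub _ _
            _ = |cK K u| + 1 := by norm_num
      _ ≤ Real.cosh (Real.sqrt |K| * L) + 1 := by linarith [cK_abs_le (K := K) hu]

lemma exists_sol (K lam x y L vx vy : ℝ) (hxy : x < y) (hDK : LtDK K (y - x))
    (hL : y - x ≤ L) (hhalf : K < 0 → Real.sqrt (-K) * L ≤ Real.pi / 2) :
    ∃ g : ℝ → ℝ, IsSol K lam g ∧ g x = vx ∧ g y = vy ∧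
      ∀ t ∈ Icc x y,
        |g t| ≤ (2 * |vx| + |vy|) * Real.cosh (Real.sqrt |K| * L) + 2 * Qb K lam L := by
  set d := y - x with hd
  have hd0 : 0 < d := by simp [hd]; linarith
  have hS : 0 < sK K d := sK_pos hd0 hDK
  set B := (vy - vx * cK K d - qK K lam d) / sK K d with hB
  set g : ℝ → ℝ := fun t => vx * cK K (t - x) + B * sK K (t - x) + qK K lam (t - x) with hg
  have hc : ∀ t : ℝ, HasDerivAt (fun t => cK K (t - x)) (K * sK K (t - x)) t := by
    intro t
    have := (hasDerivAt_cK K (t - x)).comp t ((hasDerivAt_id t).sub_const x)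
    exact this.congr_deriv (mul_one _)
  have hs : ∀ t : ℝ, HasDerivAt (fun t => sK K (t - x)) (cK K (t - x)) t := by
    intro t
    have := (hasDerivAt_sK K (t - x)).comp t ((hasDerivAt_id t).sub_const x)
    exact this.congr_deriv (mul_one _)
  have hq : ∀ t : ℝ, HasDerivAt (fun t => qK K lam (t - x)) (lam * sK K (t - x)) t := by
    intro t
    have := (hasDerivAt_qK K lam (t - x)).comp t ((hasDerivAt_id t).sub_const x)
    exact this.congr_deriv (mul_one _)
  set D1 : ℝ → ℝ := fun t => vx * (K * sK K (t - x)) + B * cK K (t - x) + lam * sK K (t - x)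
    with hD1
  have hg1 : ∀ t, HasDerivAt g (D1 t) t := by
    intro t
    exact (((hc t).const_mul vx).add ((hs t).const_mul B)).add (hq t)
  have hderiv : deriv g = D1 := funext fun t => (hg1 t).deriv
  have hg2 : ∀ t, HasDerivAt D1 (K * g t + lam) t := by
    intro t
    have h := ((((hs t).const_mul K).const_mul vx).add (((hc t).const_mul B))).add
      ((hs t).const_mul lam)
    refine h.congr_deriv (Eq.symm ?_)
    simp only [hg]
    linear_combination (-1 : ℝ) * lam_cK_eq K lam (t - x)
  have hsol : IsSol K lam g := by
    refine ⟨fun t => (hg1 t).differentiableAt, fun t => ?_⟩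
    rw [hderiv]; exact hg2 t
  have hgx : g x = vx := by
    simp [hg, sub_self, cK_zero, sK_zero, qK_zero]
  have hgy : g y = vy := by
    have : y - x = d := rfl
    simp only [hg, this]
    rw [hB]
    field_simp
    ring
  refine ⟨g, hsol, hgx, hgy, ?_⟩
  intro t ht
  have hu0 : 0 ≤ t - x := by linarith [ht.1]
  have hud : t - x ≤ d := by simp [hd]; linarith [ht.2]
  have huL : |t - x| ≤ L := by rw [abs_of_nonneg hu0]; linarith
  have hdL : |d| ≤ L := by rw [abs_of_nonneg hd0.le]; exact hL
  set Cb := Real.cosh (Real.sqrt |K| * L) with hCb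
  have hCb1 : 1 ≤ Cb := Real.one_le_cosh _
  have h1 : |vx * cK K (t - x)| ≤ |vx| * Cb := by
    rw [abs_mul]
    exact mul_le_mul_of_nonneg_left (cK_abs_le huL) (abs_nonneg vx)
  have h2 : |qK K lam (t - x)| ≤ Qb K lam L := qK_abs_le huL
  have hsnn : 0 ≤ sK K (t - x) := sK_nonneg hu0 (by linarith) hhalf
  have hsle : sK K (t - x) ≤ sK K d := sK_le_sK hu0 hud hL hhalf
  have h3 : |B * sK K (t - x)| ≤ |B| * sK K d := by
    rw [abs_mul, abs_of_nonneg hsnn]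
    exact mul_le_mul_of_nonneg_left hsle (abs_nonneg B)
  have h4 : |B| * sK K d = |vy - vx * cK K d - qK K lam d| := by
    rw [← abs_of_pos hS, ← abs_mul, hB, div_mul_cancel₀]
    exact hS.ne'
  have h5 : |vy - vx * cK K d - qK K lam d| ≤ |vy| + |vx| * Cb + Qb K lam L := by
    have e1 : |vx * cK K d| ≤ |vx| * Cb := by
      rw [abs_mul]; exact mul_le_mul_of_nonneg_left (cK_abs_le hdL) (abs_nonneg vx)
    have e2 : |qK K lam d| ≤ Qb K lam L := qK_abs_le hdL
    calc |vy - vx * cK K d - qK K lam d|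
        ≤ |vy| + |vx * cK K d| + |qK K lam d| := by
          have := abs_sub (vy - vx * cK K d) (qK K lam d)
          have := abs_sub vy (vx * cK K d)
          calc |vy - vx * cK K d - qK K lam d| ≤ |vy - vx * cK K d| + |qK K lam d| :=
                abs_sub _ _
            _ ≤ |vy| + |vx * cK K d| + |qK K lam d| := by
                have := abs_sub vy (vx * cK K d); linarith
      _ ≤ |vy| + |vx| * Cb + Qb K lam L := by linarith
  have hvy : |vy| ≤ |vy| * Cb := le_mul_of_one_le_right (abs_nonneg vy) hCb1
  calc |g t| ≤ |vx * cK K (t - x)| + |B * sK K (t - x)| + |qK K lam (t - x)| := by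
        simp only [hg]
        calc |vx * cK K (t - x) + B * sK K (t - x) + qK K lam (t - x)|
            ≤ |vx * cK K (t - x) + B * sK K (t - x)| + |qK K lam (t - x)| := abs_add_le _ _
          _ ≤ |vx * cK K (t - x)| + |B * sK K (t - x)| + |qK K lam (t - x)| := by
              have := abs_add_le (vx * cK K (t - x)) (B * sK K (t - x)); linarith
    _ ≤ (2 * |vx| + |vy|) * Cb + 2 * Qb K lam L := by nlinarith [Qb_nonneg K lam L]

lemma key (K lam : ℝ) (I : Set ℝ) (hIopen : IsOpen I)
    (f : ℝ → ℝ) (hf : ContinuousOn f I) (hsub : JensenSub K lam f I)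
    (t₀ : ℝ) (ht₀ : t₀ ∈ I) :
    ∃ c > (0:ℝ), ∃ ε > (0:ℝ), Icc (t₀ - ε) (t₀ + ε) ⊆ I ∧
      ConvexOn ℝ (Ioo (t₀ - ε) (t₀ + ε)) (fun t => f t + c * t ^ 2) := by
  obtain ⟨ε₁, hε₁, hball⟩ := Metric.isOpen_iff.1 hIopen t₀ ht₀
  obtain ⟨ε, hε_def⟩ : ∃ x : ℝ,
      x = if K < 0 then min (ε₁ / 2) (Real.pi / (4 * Real.sqrt (-K))) else ε₁ / 2 := ⟨_, rfl⟩
  have hε : 0 < ε := by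
    rw [hε_def]; split
    · rename_i hK
      have h0 : (0:ℝ) < Real.sqrt (-K) := Real.sqrt_pos.2 (by linarith)
      have := Real.pi_pos
      exact lt_min (by linarith) (by positivity)
    · linarith
  have hεε₁ : ε ≤ ε₁ / 2 := by rw [hε_def]; split; exacts [min_le_left _ _, le_refl _]
  have hIcc : Icc (t₀ - ε) (t₀ + ε) ⊆ I := by
    intro s hs
    apply hball
    rw [Metric.mem_ball, Real.dist_eq, abs_lt]
    constructor <;> [linarith [hs.1]; linarith [hs.2]]
  obtain ⟨L, hL_def⟩ : ∃ x : ℝ, x = 2 * ε := ⟨_, rfl⟩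
  have hhalf : K < 0 → Real.sqrt (-K) * L ≤ Real.pi / 2 := by
    intro hK
    have h0 : (0:ℝ) < Real.sqrt (-K) := Real.sqrt_pos.2 (by linarith)
    have hε' : ε ≤ Real.pi / (4 * Real.sqrt (-K)) := by
      rw [hε_def, if_pos hK]; exact min_le_right _ _
    rw [hL_def]
    calc Real.sqrt (-K) * (2 * ε) ≤ Real.sqrt (-K) * (2 * (Real.pi / (4 * Real.sqrt (-K)))) := by
          apply mul_le_mul_of_nonneg_left _ h0.le
          linarith
      _ = Real.pi / 2 := by field_simp; ring
  have hLDK : ∀ u : ℝ, u ≤ L → LtDK K u := by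
    intro u hu hK
    have h0 : (0:ℝ) < Real.sqrt (-K) := Real.sqrt_pos.2 (by linarith)
    have := hhalf hK
    have hpi := Real.pi_pos
    rw [lt_div_iff₀ h0]
    nlinarith
  obtain ⟨C, hC⟩ := (isCompact_Icc (a := t₀ - ε) (b := t₀ + ε)).exists_bound_of_continuousOn
    (hf.mono hIcc)
  obtain ⟨M, hM_def⟩ : ∃ x : ℝ, x = max C 0 := ⟨_, rfl⟩
  have hM : ∀ s ∈ Icc (t₀ - ε) (t₀ + ε), |f s| ≤ M := by
    intro s hs
    rw [hM_def]
    calc |f s| = ‖f s‖ := rfl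
      _ ≤ C := hC s hs
      _ ≤ max C 0 := le_max_left _ _
  have hM0 : 0 ≤ M := by rw [hM_def]; exact le_max_right _ _
  obtain ⟨Cb, hCb_def⟩ : ∃ x : ℝ, x = Real.cosh (Real.sqrt |K| * L) := ⟨_, rfl⟩
  have hCb1 : 1 ≤ Cb := by rw [hCb_def]; exact Real.one_le_cosh _
  obtain ⟨Q, hQ_def⟩ : ∃ x : ℝ, x = Qb K lam L := ⟨_, rfl⟩
  have hQ0 : 0 ≤ Q := by rw [hQ_def]; exact Qb_nonneg K lam L
  obtain ⟨G, hG_def⟩ : ∃ x : ℝ, x = 3 * M * Cb + 2 * Q := ⟨_, rfl⟩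
  have hG0 : 0 ≤ G := by rw [hG_def]; nlinarith
  obtain ⟨c, hc_def⟩ : ∃ x : ℝ, x = (|K| * G + |lam|) / 2 + 1 := ⟨_, rfl⟩
  have hc : 0 < c := by
    have h1 : 0 ≤ |K| * G := mul_nonneg (abs_nonneg K) hG0
    have h2 : 0 ≤ |lam| := abs_nonneg lam
    rw [hc_def]; linarith
  have hIooIcc : Ioo (t₀ - ε) (t₀ + ε) ⊆ Icc (t₀ - ε) (t₀ + ε) := Ioo_subset_Icc_self
  have main : ∀ p ∈ Ioo (t₀ - ε) (t₀ + ε), ∀ q ∈ Ioo (t₀ - ε) (t₀ + ε), p < q →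
      ∀ a b : ℝ, 0 ≤ a → 0 ≤ b → a + b = 1 →
      f (a * p + b * q) + c * (a * p + b * q) ^ 2
        ≤ a * (f p + c * p ^ 2) + b * (f q + c * q ^ 2) := by
    intro p hp q hq hpq a b ha hb hab
    have hdL : q - p ≤ L := by
      rw [hL_def]
      have := hp.1; have := hq.2
      linarith
    have hDK : LtDK K (q - p) := hLDK _ hdL
    obtain ⟨g, hsol, hgp, hgq, hbound⟩ :=
      exists_sol K lam p q L (f p) (f q) hpq hDK hdL hhalf
    have hfg := hsub p (hIcc (hIooIcc hp)) q (hIcc (hIooIcc hq)) hpq hDK g hsol hgp hgq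
    have hboundG : ∀ t ∈ Icc p q, |g t| ≤ G := by
      intro t ht
      have hpM := hM p (hIooIcc hp)
      have hqM := hM q (hIooIcc hq)
      have hb' := hbound t ht
      rw [← hCb_def, ← hQ_def] at hb'
      rw [hG_def]
      nlinarith
    have hq2 : ∀ t : ℝ, HasDerivAt (fun t : ℝ => c * t ^ 2) (2 * c * t) t := by
      intro t
      have := (hasDerivAt_pow 2 t).const_mul c
      refine this.congr_deriv (Eq.symm ?_)
      ring
    have hφconv : ConvexOn ℝ (Icc p q) (fun t => g t + c * t ^ 2) := by
      apply convexOn_of_hasDerivWithinAt2_nonneg (convex_Icc p q)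
        (f' := fun t => deriv g t + 2 * c * t) (f'' := fun t => K * g t + lam + 2 * c)
      · exact (hsol.1.continuous.add (continuous_const.mul (continuous_pow 2))).continuousOn
      · intro t ht
        exact (((hsol.1 t).hasDerivAt.add (hq2 t))).hasDerivWithinAt
      · intro t ht
        have h2 : HasDerivAt (fun t : ℝ => 2 * c * t) (2 * c) t := by
          simpa using (hasDerivAt_id t).const_mul (2 * c)
        exact ((hsol.2 t).add h2).hasDerivWithinAt
      · intro t ht
        rw [interior_Icc] at ht
        have hbG := hboundG t (Ioo_subset_Icc_self ht)
        have h1 : |K * g t| ≤ |K| * G := by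
          rw [abs_mul]
          exact mul_le_mul_of_nonneg_left hbG (abs_nonneg K)
        have h2 := neg_abs_le (K * g t)
        have h3 := neg_abs_le lam
        rw [hc_def]
        linarith
    have hz1 : (a * p + b * q) - p = b * (q - p) := by linear_combination (p : ℝ) * hab
    have hz2 : q - (a * p + b * q) = a * (q - p) := by linear_combination (-q : ℝ) * hab
    have hz : a * p + b * q ∈ Icc p q := by
      have e1 := mul_nonneg hb (sub_nonneg.2 hpq.le)
      have e2 := mul_nonneg ha (sub_nonneg.2 hpq.le)
      constructor <;> linarith
    have h1 : f (a * p + b * q) ≤ g (a * p + b * q) := hfg _ hz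
    have h2 : g (a * p + b * q) + c * (a * p + b * q) ^ 2
        ≤ a * (g p + c * p ^ 2) + b * (g q + c * q ^ 2) := by
      have := hφconv.2 (left_mem_Icc.2 hpq.le) (right_mem_Icc.2 hpq.le) ha hb hab
      simpa [smul_eq_mul] using this
    rw [hgp, hgq] at h2
    linarith
  refine ⟨c, hc, ε, hε, hIcc, convex_Ioo _ _, ?_⟩
  intro p hp q hq a b ha hb hab
  simp only [smul_eq_mul]
  rcases lt_trichotomy p q with h | h | h
  · exact main p hp q hq h a b ha hb hab
  · subst h
    have h1 : a * p + b * p = p := by linear_combination (p : ℝ) * hab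
    have h2 : a * (f p + c * p ^ 2) + b * (f p + c * p ^ 2) = f p + c * p ^ 2 := by
      linear_combination (f p + c * p ^ 2) * hab
    rw [h1, h2]
  · have := main q hq p hp h b a hb ha (by linarith)
    calc f (a * p + b * q) + c * (a * p + b * q) ^ 2
        = f (b * q + a * p) + c * (b * q + a * p) ^ 2 := by ring_nf
      _ ≤ b * (f q + c * q ^ 2) + a * (f p + c * p ^ 2) := this
      _ = a * (f p + c * p ^ 2) + b * (f q + c * q ^ 2) := by ring

lemma lip_sub {F q : ℝ → ℝ} {s : Set ℝ} {Kf Kg : NNReal} (hF : LipschitzOnWith Kf F s)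
    (hq : LipschitzOnWith Kg q s) {f : ℝ → ℝ} (hfe : ∀ t ∈ s, f t = F t - q t) :
    LipschitzOnWith (Kf + Kg) f s := by
  rw [lipschitzOnWith_iff_dist_le_mul] at hF hq ⊢
  intro x hx y hy
  have h1 := hF x hx y hy
  have h2 := hq x hx y hy
  rw [Real.dist_eq] at h1 h2 ⊢
  rw [hfe x hx, hfe y hy]
  push_cast
  have e : F x - q x - (F y - q y) = (F x - F y) - (q x - q y) := by ring
  rw [e]
  calc |F x - F y - (q x - q y)| ≤ |F x - F y| + |q x - q y| := abs_sub _ _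
    _ ≤ (Kf : ℝ) * |x - y| + (Kg : ℝ) * |x - y| := by
        rw [Real.dist_eq] at h1 h2
        linarith
    _ = ((Kf : ℝ) + (Kg : ℝ)) * |x - y| := by ring

/-- A continuous Jensen subsolution of `f'' - K f = λ` on an open interval `I`
is locally, after adding `c t²` for some `c > 0`, convex; in particular it is locally
Lipschitz, has one-sided derivatives everywhere, and `f'(t⁻) ≤ f'(t⁺)`. -/
theorem jensen_subsolution_almost_convex
    (K lam : ℝ) (I : Set ℝ) (hIopen : IsOpen I) (hIinterval : I.OrdConnected)
    (f : ℝ → ℝ) (hf : ContinuousOn f I) (hsub : JensenSub K lam f I) :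
    (∀ t₀ ∈ I, ∃ c > (0 : ℝ), ∃ ε > (0 : ℝ),
        Set.Ioo (t₀ - ε) (t₀ + ε) ⊆ I ∧
        ConvexOn ℝ (Set.Ioo (t₀ - ε) (t₀ + ε)) (fun t => f t + c * t ^ 2)) ∧
    (∀ t₀ ∈ I, ∃ ε > (0 : ℝ), ∃ C : NNReal,
        Set.Ioo (t₀ - ε) (t₀ + ε) ⊆ I ∧
        LipschitzOnWith C f (Set.Ioo (t₀ - ε) (t₀ + ε))) ∧
    (∀ t ∈ I, ∃ dm dp : ℝ,
        HasDerivWithinAt f dm (Set.Iio t) t ∧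
        HasDerivWithinAt f dp (Set.Ioi t) t ∧ dm ≤ dp) := by
  refine ⟨?_, ?_, ?_⟩
  · intro t₀ ht₀
    obtain ⟨c, hc, ε, hε, hIcc, hconv⟩ := key K lam I hIopen f hf hsub t₀ ht₀
    exact ⟨c, hc, ε, hε, Ioo_subset_Icc_self.trans hIcc, hconv⟩
  · -- Lipschitz
    intro t₀ ht₀
    obtain ⟨c, hc, ε, hε, hIcc, hconv⟩ := key K lam I hIopen f hf hsub t₀ ht₀
    set F : ℝ → ℝ := fun t => f t + c * t ^ 2 with hF_def
    have hFcont : ContinuousOn F (Icc (t₀ - ε) (t₀ + ε)) :=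
      (hf.mono hIcc).add (continuous_const.mul (continuous_pow 2)).continuousOn
    obtain ⟨M', hM'⟩ := (isCompact_Icc (a := t₀ - ε) (b := t₀ + ε)).exists_bound_of_continuousOn
      hFcont
    have hconvB : ConvexOn ℝ (Metric.ball t₀ ε) F := by
      rw [Real.ball_eq_Ioo]; exact hconv
    have habs : ∀ a, dist a t₀ < ε → |F a| ≤ M' := by
      intro a ha
      apply hM' a
      rw [Real.dist_eq, abs_lt] at ha
      constructor <;> linarith [ha.1, ha.2]
    have hLipF := hconvB.lipschitzOnWith_of_abs_le (show (0:ℝ) < ε / 2 by linarith) habs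
    rw [show ε - ε / 2 = ε / 2 by ring] at hLipF
    -- Lipschitz bound for c * t ^ 2 on the small ball
    have hq2 : ∀ t : ℝ, HasDerivAt (fun t : ℝ => c * t ^ 2) (2 * c * t) t := by
      intro t
      have := (hasDerivAt_pow 2 t).const_mul c
      refine this.congr_deriv (Eq.symm ?_)
      ring
    have hC₂0 : (0:ℝ) ≤ 2 * c * (|t₀| + ε) := by positivity
    set C₂ : NNReal := ⟨2 * c * (|t₀| + ε), hC₂0⟩ with hC₂_def
    have hLipq : LipschitzOnWith C₂ (fun t : ℝ => c * t ^ 2) (Metric.ball t₀ (ε / 2)) := by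
      apply Convex.lipschitzOnWith_of_nnnorm_hasDerivWithin_le (f' := fun t => 2 * c * t)
        (convex_ball t₀ (ε / 2)) (fun s _ => (hq2 s).hasDerivWithinAt) ?_
      intro s hs
      · skip
        rw [← NNReal.coe_le_coe]
        rw [Metric.mem_ball, Real.dist_eq] at hs
        have h1 : |s| ≤ |s - t₀| + |t₀| := by
          have := abs_sub_abs_le_abs_sub s t₀
          linarith [abs_sub_abs_le_abs_sub s t₀]
        have : ‖2 * c * s‖ = 2 * c * |s| := by
          rw [Real.norm_eq_abs, abs_mul, abs_of_nonneg (by positivity : (0:ℝ) ≤ 2 * c)]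
        rw [coe_nnnorm, this]
        show 2 * c * |s| ≤ 2 * c * (|t₀| + ε)
        nlinarith [abs_nonneg s, abs_nonneg (s - t₀)]
    have hfe : ∀ t ∈ Metric.ball t₀ (ε / 2), f t = F t - c * t ^ 2 := by
      intro t _; simp [hF_def]
    have hLipf := lip_sub hLipF hLipq hfe
    refine ⟨ε / 2, by linarith, (2 * M' / (ε / 2)).toNNReal + C₂, ?_, ?_⟩
    · intro s hs
      apply Ioo_subset_Icc_self.trans hIcc
      constructor <;> [linarith [hs.1]; linarith [hs.2]]
    · rw [← Real.ball_eq_Ioo]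
      exact hLipf
  · -- one-sided derivatives
    intro t₀ ht₀
    obtain ⟨c, hc, ε, hε, hIcc, hconv⟩ := key K lam I hIopen f hf hsub t₀ ht₀
    set F : ℝ → ℝ := fun t => f t + c * t ^ 2 with hF_def
    set a := t₀ - ε with ha_def
    set b := t₀ + ε with hb_def
    have hta : a < t₀ := by rw [ha_def]; linarith
    have htb : t₀ < b := by rw [hb_def]; linarith
    have ht₀mem : t₀ ∈ Ioo a b := ⟨hta, htb⟩
    have hmono : MonotoneOn (slope F t₀) (Ioo a b \ {t₀}) := hconv.slope_mono ht₀mem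
    have hmemR : ∀ z ∈ Ioo t₀ b, z ∈ Ioo a b \ {t₀} := by
      intro z hz
      exact ⟨⟨hta.trans hz.1, hz.2⟩, fun h => absurd (h ▸ hz.1) (lt_irrefl _)⟩
    have hmemL : ∀ z ∈ Ioo a t₀, z ∈ Ioo a b \ {t₀} := by
      intro z hz
      exact ⟨⟨hz.1, hz.2.trans htb⟩, fun h => absurd (h ▸ hz.2) (lt_irrefl _)⟩
    have hneR : (Ioo t₀ b).Nonempty := nonempty_Ioo.2 htb
    have hneL : (Ioo a t₀).Nonempty := nonempty_Ioo.2 hta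
    obtain ⟨w, hw⟩ := id hneL
    obtain ⟨v, hv⟩ := id hneR
    have hbddR : BddBelow (slope F t₀ '' Ioo t₀ b) := by
      refine ⟨slope F t₀ w, ?_⟩
      rintro _ ⟨z, hz, rfl⟩
      exact hmono (hmemL w hw) (hmemR z hz) (hw.2.trans hz.1).le
    have hbddL : BddAbove (slope F t₀ '' Ioo a t₀) := by
      refine ⟨slope F t₀ v, ?_⟩
      rintro _ ⟨z, hz, rfl⟩
      exact hmono (hmemL z hz) (hmemR v hv) (hz.2.trans hv.1).le
    have hmonoR : MonotoneOn (slope F t₀) (Ioo t₀ b) := by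
      intro u hu z hz huz
      exact hmono (hmemR u hu) (hmemR z hz) huz
    have hmonoL : MonotoneOn (slope F t₀) (Ioo a t₀) := by
      intro u hu z hz huz
      exact hmono (hmemL u hu) (hmemL z hz) huz
    have htendR := hmonoR.tendsto_nhdsWithin_Ioo_right hneR hbddR
    have htendL := hmonoL.tendsto_nhdsWithin_Ioo_left hneL hbddL
    set dpF := sInf (slope F t₀ '' Ioo t₀ b) with hdpF
    set dmF := sSup (slope F t₀ '' Ioo a t₀) with hdmF
    have hFm : HasDerivWithinAt F dmF (Iio t₀) t₀ := by
      rw [hasDerivWithinAt_iff_tendsto_slope]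
      have : Iio t₀ \ {t₀} = Iio t₀ :=
        diff_singleton_eq_self (fun h => absurd h.out (lt_irrefl _))
      rw [this]
      exact htendL
    have hFp : HasDerivWithinAt F dpF (Ioi t₀) t₀ := by
      rw [hasDerivWithinAt_iff_tendsto_slope]
      have : Ioi t₀ \ {t₀} = Ioi t₀ :=
        diff_singleton_eq_self (fun h => absurd h.out (lt_irrefl _))
      rw [this]
      exact htendR
    have hle : dmF ≤ dpF := by
      apply csSup_le (hneL.image _)
      rintro _ ⟨z, hz, rfl⟩
      apply le_csInf (hneR.image _)
      rintro _ ⟨u, hu, rfl⟩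
      exact hmono (hmemL z hz) (hmemR u hu) (hz.2.trans hu.1).le
    have hq2 : HasDerivAt (fun t : ℝ => c * t ^ 2) (2 * c * t₀) t₀ := by
      have := (hasDerivAt_pow 2 t₀).const_mul c
      refine this.congr_deriv (Eq.symm ?_)
      ring
    have hfeq : f = fun t => F t - c * t ^ 2 := by
      funext t; simp [hF_def]
    refine ⟨dmF - 2 * c * t₀, dpF - 2 * c * t₀, ?_, ?_, by linarith⟩
    · rw [hfeq]
      exact hFm.sub hq2.hasDerivWithinAt
    · rw [hfeq]
      exact hFp.sub hq2.hasDerivWithinAt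
end

section
/- Let K ∈ ℝ and let ψ : [0, L] → ℝ be a twice continuously differentiable function satisfying ψ''(t) − K ψ(t) ≥ 0 for all t ∈ [0, L], ψ(0) = 0 and ψ(L) = 0, and assume L < D_K. Then ψ(t) ≤ 0 for all t ∈ [0, L]. -/
open Set MeasureTheory

lemma aux_key (K L : ℝ) (ψ ψ' ψ'' φ φ' : ℝ → ℝ)
    (hd1 : ∀ t ∈ Set.Icc (0 : ℝ) L, HasDerivWithinAt ψ (ψ' t) (Set.Icc 0 L) t)
    (hd2 : ∀ t ∈ Set.Icc (0 : ℝ) L, HasDerivWithinAt ψ' (ψ'' t) (Set.Icc 0 L) t)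
    (hineq : ∀ t ∈ Set.Icc (0 : ℝ) L, K * ψ t ≤ ψ'' t)
    (h0 : ψ 0 = 0) (hLval : ψ L = 0)
    (hφ1 : ∀ t, HasDerivAt φ (φ' t) t)
    (hφ2 : ∀ t, HasDerivAt φ' (K * φ t) t)
    (hφpos : ∀ t ∈ Set.Icc (0 : ℝ) L, 0 < φ t) :
    ∀ t ∈ Set.Icc (0 : ℝ) L, ψ t ≤ 0 := by
  by_contra h
  push_neg at h
  obtain ⟨c, hc, hcpos⟩ := h
  have hc0 : c ≠ 0 := by rintro rfl; rw [h0] at hcpos; exact lt_irrefl 0 hcpos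
  have hcL : c ≠ L := by rintro rfl; rw [hLval] at hcpos; exact lt_irrefl 0 hcpos
  have hcIoo : c ∈ Set.Ioo (0 : ℝ) L := ⟨lt_of_le_of_ne hc.1 (Ne.symm hc0), lt_of_le_of_ne hc.2 hcL⟩
  have hL : (0 : ℝ) < L := lt_trans hcIoo.1 hcIoo.2
  set W : ℝ → ℝ := fun t => ψ' t * φ t - ψ t * φ' t with hW
  -- derivative of W within Icc
  have hWd : ∀ t ∈ Set.Icc (0 : ℝ) L,
      HasDerivWithinAt W (φ t * (ψ'' t - K * ψ t)) (Set.Icc 0 L) t := by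
    intro t ht
    have h1 := ((hd2 t ht).mul (hφ1 t).hasDerivWithinAt).sub
      ((hd1 t ht).mul (hφ2 t).hasDerivWithinAt)
    exact h1.congr_deriv (by ring)
  have hWcont : ContinuousOn W (Set.Icc 0 L) := fun t ht =>
    (hWd t ht).continuousWithinAt
  have hWmono : MonotoneOn W (Set.Icc 0 L) := by
    apply monotoneOn_of_hasDerivWithinAt_nonneg (convex_Icc 0 L) hWcont
    · intro x hx
      exact (hWd x (interior_subset hx)).mono interior_subset
    · intro x hx
      rw [interior_Icc] at hx
      have hx' := Set.Ioo_subset_Icc_self hx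
      exact mul_nonneg (hφpos x hx').le (by linarith [hineq x hx'])
  -- w = ψ / φ
  set w : ℝ → ℝ := fun t => ψ t / φ t with hw
  have hwd : ∀ t ∈ Set.Icc (0 : ℝ) L,
      HasDerivWithinAt w (W t / (φ t) ^ 2) (Set.Icc 0 L) t := by
    intro t ht
    have h := (hd1 t ht).div (hφ1 t).hasDerivWithinAt (hφpos t ht).ne'
    exact h
  have hwcont : ContinuousOn w (Set.Icc 0 L) := fun t ht => (hwd t ht).continuousWithinAt
  have hwda : ∀ t ∈ Set.Ioo (0 : ℝ) L, HasDerivAt w (W t / (φ t) ^ 2) t := by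
    intro t ht
    exact (hwd t (Set.Ioo_subset_Icc_self ht)).hasDerivAt
      (Icc_mem_nhds ht.1 ht.2)
  have hw0 : w 0 = 0 := by simp [hw, h0]
  have hwL : w L = 0 := by simp [hw, hLval]
  have hwc : 0 < w c := div_pos hcpos (hφpos c hc)
  -- MVT on [0, c]
  obtain ⟨a, ha, haslope⟩ := exists_hasDerivAt_eq_slope w (fun t => W t / (φ t) ^ 2)
    hcIoo.1 (hwcont.mono (Set.Icc_subset_Icc le_rfl hc.2))
    (fun x hx => hwda x ⟨hx.1, lt_trans hx.2 hcIoo.2⟩)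
  have haIcc : a ∈ Set.Icc (0 : ℝ) L := ⟨ha.1.le, le_trans ha.2.le hc.2⟩
  have hslope_pos : 0 < (w c - w 0) / (c - 0) := by
    rw [hw0, sub_zero, sub_zero]
    exact div_pos hwc hcIoo.1
  have hWa : 0 < W a := by
    have h2 : 0 < W a / (φ a) ^ 2 := haslope ▸ hslope_pos
    rcases div_pos_iff.mp h2 with ⟨h3, _⟩ | ⟨_, h3⟩
    · exact h3
    · exact absurd (pow_pos (hφpos a haIcc) 2) (not_lt.mpr h3.le)
  -- w strictly monotone on [a, L]
  have hmono : StrictMonoOn w (Set.Icc a L) := by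
    apply strictMonoOn_of_hasDerivWithinAt_pos (convex_Icc a L)
      (hwcont.mono (Set.Icc_subset_Icc ha.1.le le_rfl))
      (f' := fun t => W t / (φ t) ^ 2)
    · intro x hx
      rw [interior_Icc] at hx
      exact ((hwda x ⟨lt_trans ha.1 hx.1, hx.2⟩).hasDerivWithinAt)
    · intro x hx
      rw [interior_Icc] at hx
      have hxIcc : x ∈ Set.Icc (0 : ℝ) L := ⟨(lt_trans ha.1 hx.1).le, hx.2.le⟩
      have hWx : 0 < W x := lt_of_lt_of_le hWa (hWmono haIcc hxIcc (le_of_lt hx.1))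
      exact div_pos hWx (pow_pos (hφpos x hxIcc) 2)
  have : w c < w L := hmono ⟨ha.2.le, hc.2⟩ ⟨ha.2.le.trans hc.2, le_rfl⟩ hcIoo.2
  rw [hwL] at this
  linarith

/-- If `ψ : [0, L] → ℝ` is C², satisfies `ψ'' - K ψ ≥ 0`, vanishes at the
endpoints, and `L < D_K`, then `ψ ≤ 0` on `[0, L]`. -/
theorem smooth_subsolution_nonpos
    (K L : ℝ) (hL : 0 ≤ L) (hLD : LtDK K L)
    (ψ ψ' ψ'' : ℝ → ℝ)
    (hd1 : ∀ t ∈ Set.Icc (0 : ℝ) L, HasDerivWithinAt ψ (ψ' t) (Set.Icc 0 L) t)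
    (hd2 : ∀ t ∈ Set.Icc (0 : ℝ) L, HasDerivWithinAt ψ' (ψ'' t) (Set.Icc 0 L) t)
    (hcont : ContinuousOn ψ'' (Set.Icc 0 L))
    (hineq : ∀ t ∈ Set.Icc (0 : ℝ) L, K * ψ t ≤ ψ'' t)
    (h0 : ψ 0 = 0) (hLval : ψ L = 0) :
    ∀ t ∈ Set.Icc (0 : ℝ) L, ψ t ≤ 0 := by
  by_cases hK : K < 0
  · set s := Real.sqrt (-K) with hsdef
    have hs : 0 < s := Real.sqrt_pos.mpr (by linarith)
    have hs2 : s * s = -K := Real.mul_self_sqrt (by linarith)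
    have hsL : s * L < Real.pi := by
      have h := hLD hK
      have := (lt_div_iff₀ hs).mp h
      linarith
    have hu : ∀ t : ℝ, HasDerivAt (fun t => s * (t - L / 2)) s t := by
      intro t
      simpa using ((hasDerivAt_id t).sub_const (L / 2)).const_mul s
    apply aux_key K L ψ ψ' ψ'' (fun t => Real.cos (s * (t - L / 2)))
      (fun t => -Real.sin (s * (t - L / 2)) * s) hd1 hd2 hineq h0 hLval
    · intro t
      exact (hu t).cos
    · intro t
      have h2 := ((hu t).sin.neg).mul_const s
      refine h2.congr_deriv ?_
      have hK2 : K = -(s * s) := by linarith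
      rw [hK2]; ring
    · intro t ht
      apply Real.cos_pos_of_mem_Ioo
      constructor
      · have h1 : s * (t - L / 2) ≥ -(s * L / 2) := by nlinarith [ht.1, ht.2]
        have := Real.pi_pos
        nlinarith
      · have h1 : s * (t - L / 2) ≤ s * L / 2 := by nlinarith [ht.1, ht.2]
        have := Real.pi_pos
        nlinarith
  · push_neg at hK
    set r := Real.sqrt K with hrdef
    have hr2 : r * r = K := Real.mul_self_sqrt hK
    have hu : ∀ t : ℝ, HasDerivAt (fun t => r * (t - L / 2)) r t := by
      intro t
      simpa using ((hasDerivAt_id t).sub_const (L / 2)).const_mul r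
    apply aux_key K L ψ ψ' ψ'' (fun t => Real.cosh (r * (t - L / 2)))
      (fun t => Real.sinh (r * (t - L / 2)) * r) hd1 hd2 hineq h0 hLval
    · intro t
      exact (hu t).cosh
    · intro t
      have h2 := (hu t).sinh.mul_const r
      refine h2.congr_deriv ?_
      rw [← hr2]; ring
    · intro t _
      exact Real.cosh_pos _
end

section
/- Let K ∈ ℝ, let 0 < L < D_K, and let ψ : [0, L] → ℝ be a continuous function which is a subsolution of ψ'' − K ψ = 0 in the sense of Jensen (i.e. with λ = 0). If ψ(0) ≤ 0 and ψ(L) ≤ 0, with at least one of these two inequalities strict, then ψ(t) < 0 for all t ∈ (0, L). -/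
open Set MeasureTheory

lemma key_s4 (K L : ℝ) (hL : 0 < L) (hLD : LtDK K L)
    (ψ : ℝ → ℝ) (hsub : JensenSub K 0 ψ (Set.Icc 0 L))
    (h0 : ψ 0 ≤ 0) (hLval : ψ L ≤ 0) (hstrict : ψ 0 < 0 ∨ ψ L < 0)
    (S S' : ℝ → ℝ) (hS : ∀ t, HasDerivAt S (S' t) t)
    (hS' : ∀ t, HasDerivAt S' (K * S t) t)
    (hS0 : S 0 = 0) (hpos : ∀ t ∈ Set.Ioo (0:ℝ) L, 0 < S t) (hSL : 0 < S L) :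
    ∀ t ∈ Set.Ioo (0 : ℝ) L, ψ t < 0 := by
  have hc : S L ≠ 0 := ne_of_gt hSL
  set g : ℝ → ℝ := fun t => (ψ 0 * S (L - t) + ψ L * S t) / S L with hgdef
  have hneg1 : ∀ t : ℝ, HasDerivAt (fun t : ℝ => L - t) (-1) t := by
    intro t
    exact (hasDerivAt_id t).const_sub L
  have hRev : ∀ t, HasDerivAt (fun t => S (L - t)) (-(S' (L - t))) t := by
    intro t
    exact ((hS (L - t)).comp t (hneg1 t)).congr_deriv (by ring)
  have hRev' : ∀ t, HasDerivAt (fun t => S' (L - t)) (-(K * S (L - t))) t := by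
    intro t
    exact ((hS' (L - t)).comp t (hneg1 t)).congr_deriv (by ring)
  have hg1 : ∀ t, HasDerivAt g ((ψ 0 * -(S' (L - t)) + ψ L * S' t) / S L) t := by
    intro t
    exact (((hRev t).const_mul (ψ 0)).add ((hS t).const_mul (ψ L))).div_const (S L)
  have hderiv : deriv g = fun t => (ψ 0 * -(S' (L - t)) + ψ L * S' t) / S L := by
    funext t; exact (hg1 t).deriv
  have hsol : IsSol K 0 g := by
    constructor
    · exact fun t => (hg1 t).differentiableAt
    · intro t
      rw [hderiv]
      have h2 : HasDerivAt (fun t => (ψ 0 * -(S' (L - t)) + ψ L * S' t) / S L)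
          ((ψ 0 * -(-(K * S (L - t))) + ψ L * (K * S t)) / S L) t := by
        have a1 : HasDerivAt (fun t => -(S' (L - t))) (-(-(K * S (L - t)))) t :=
          (hRev' t).neg
        exact ((a1.const_mul (ψ 0)).add ((hS' t).const_mul (ψ L))).div_const (S L)
      convert h2 using 1
      field_simp [hgdef]
      simp only [hgdef]
      rw [add_zero, mul_assoc, div_mul_cancel₀ _ hc]
  have hg0 : g 0 = ψ 0 := by simp [hgdef, hS0, hc]
  have hgL : g L = ψ L := by simp [hgdef, hS0, hc]
  intro t ht
  have hle : ψ t ≤ g t := by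
    have := hsub 0 (by constructor <;> simp [le_of_lt hL]) L
      (by constructor <;> simp [le_of_lt hL]) hL (by simpa using hLD) g hsol hg0 hgL
    exact this t ⟨le_of_lt ht.1, le_of_lt ht.2⟩
  have hgt : g t < 0 := by
    have p1 : 0 < S (L - t) := hpos (L - t) ⟨by linarith [ht.2], by linarith [ht.1]⟩
    have p2 : 0 < S t := hpos t ht
    have : ψ 0 * S (L - t) + ψ L * S t < 0 := by
      rcases hstrict with h | h
      · nlinarith
      · nlinarith
    exact div_neg_of_neg_of_pos this hSL
  linarith

/-- A continuous Jensen subsolution of `ψ'' - K ψ = 0` on `[0, L]` (`0 < L < D_K`)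
which is `≤ 0` at both endpoints, with at least one strict inequality, is `< 0` on `(0, L)`. -/
theorem strict_kirchberger
    (K L : ℝ) (hL : 0 < L) (hLD : LtDK K L)
    (ψ : ℝ → ℝ) (hcont : ContinuousOn ψ (Set.Icc 0 L))
    (hsub : JensenSub K 0 ψ (Set.Icc 0 L))
    (h0 : ψ 0 ≤ 0) (hLval : ψ L ≤ 0)
    (hstrict : ψ 0 < 0 ∨ ψ L < 0) :
    ∀ t ∈ Set.Ioo (0 : ℝ) L, ψ t < 0 := by
  rcases lt_trichotomy K 0 with hK | hK | hK
  · -- K < 0 : S t = sin (a t), a = √(-K)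
    set a := Real.sqrt (-K) with ha
    have ha0 : 0 < a := Real.sqrt_pos.mpr (by linarith)
    have ha2 : a ^ 2 = -K := Real.sq_sqrt (by linarith)
    have haL : a * L < Real.pi := by
      have := hLD hK
      calc a * L < a * (Real.pi / a) := by exact mul_lt_mul_of_pos_left this ha0
        _ = Real.pi := by field_simp
    refine key_s4 K L hL hLD ψ hsub h0 hLval hstrict
      (fun t => Real.sin (a * t)) (fun t => a * Real.cos (a * t)) ?_ ?_ ?_ ?_ ?_
    · intro t
      have h1 : HasDerivAt (fun t : ℝ => a * t) a t := by
        simpa using (hasDerivAt_id t).const_mul a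
      have h2 := (Real.hasDerivAt_sin (a * t)).comp t h1
      have h3 : HasDerivAt (fun t => Real.sin (a * t)) (Real.cos (a * t) * a) t := h2
      convert h3 using 1
      ring
    · intro t
      have h1 : HasDerivAt (fun t : ℝ => a * t) a t := by
        simpa using (hasDerivAt_id t).const_mul a
      have h2 := ((Real.hasDerivAt_cos (a * t)).comp t h1).const_mul a
      have h3 : HasDerivAt (fun t => a * Real.cos (a * t)) (a * (-Real.sin (a * t) * a)) t := h2
      convert h3 using 1
      show K * Real.sin (a * t) = _
      rw [show a * (-Real.sin (a * t) * a) = -(a ^ 2) * Real.sin (a * t) by ring, ha2]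
      ring
    · simp
    · intro t ht
      exact Real.sin_pos_of_pos_of_lt_pi (mul_pos ha0 ht.1)
        (lt_of_le_of_lt (by nlinarith [ht.2.le]) haL)
    · exact Real.sin_pos_of_pos_of_lt_pi (mul_pos ha0 hL) haL
  · -- K = 0 : S t = t
    refine key_s4 K L hL hLD ψ hsub h0 hLval hstrict id (fun _ => 1) ?_ ?_ ?_ ?_ ?_
    · intro t; simpa using hasDerivAt_id t
    · intro t; simpa [hK] using hasDerivAt_const t (1:ℝ)
    · rfl
    · intro t ht; exact ht.1
    · exact hL
  · -- K > 0 : S t = sinh (a t), a = √K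
    set a := Real.sqrt K with ha
    have ha0 : 0 < a := Real.sqrt_pos.mpr hK
    have ha2 : a ^ 2 = K := Real.sq_sqrt hK.le
    refine key_s4 K L hL hLD ψ hsub h0 hLval hstrict
      (fun t => Real.sinh (a * t)) (fun t => a * Real.cosh (a * t)) ?_ ?_ ?_ ?_ ?_
    · intro t
      have h1 : HasDerivAt (fun t : ℝ => a * t) a t := by
        simpa using (hasDerivAt_id t).const_mul a
      have h2 := (Real.hasDerivAt_sinh (a * t)).comp t h1
      have h3 : HasDerivAt (fun t => Real.sinh (a * t)) (Real.cosh (a * t) * a) t := h2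
      convert h3 using 1
      ring
    · intro t
      have h1 : HasDerivAt (fun t : ℝ => a * t) a t := by
        simpa using (hasDerivAt_id t).const_mul a
      have h2 := ((Real.hasDerivAt_cosh (a * t)).comp t h1).const_mul a
      have h3 : HasDerivAt (fun t => a * Real.cosh (a * t)) (a * (Real.sinh (a * t) * a)) t := h2
      convert h3 using 1
      show K * Real.sinh (a * t) = _
      rw [show a * (Real.sinh (a * t) * a) = a ^ 2 * Real.sinh (a * t) by ring, ha2]
    · simp
    · intro t ht; exact Real.sinh_pos_iff.mpr (mul_pos ha0 ht.1)
    · exact Real.sinh_pos_iff.mpr (mul_pos ha0 hL)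
end

section
/- Let K, λ ∈ ℝ and let f₁, f₂ : (a, b) → ℝ be two solutions of the ODE f'' − K f = λ, and let t₁ < t₂ be points of (a, b). If f₁(t₁) > f₂(t₁) and f₁(t₂) < f₂(t₂), then f₁ < f₂ on (t₂, min(b, t₁ + D_K)) and f₁ > f₂ on (max(a, t₂ − D_K), t₁). -/
open Set MeasureTheory

lemma sturm (K z₁ z₂ : ℝ) (h h' : ℝ → ℝ) (hz : z₁ < z₂) (hD : LtDK K (z₂ - z₁))
    (hd1 : ∀ t ∈ Icc z₁ z₂, HasDerivAt h (h' t) t)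
    (hd2 : ∀ t ∈ Icc z₁ z₂, HasDerivAt h' (K * h t) t)
    (hz1 : h z₁ = 0) (hz2 : h z₂ = 0)
    (hneg : ∀ t ∈ Ioo z₁ z₂, h t < 0) : False := by
  set d := z₂ - z₁ with hd_def
  have hd0 : 0 < d := sub_pos.2 hz
  set ω := Real.pi / d with hω_def
  have hω : 0 < ω := div_pos Real.pi_pos hd0
  have hc : -ω ^ 2 - K < 0 := by
    rcases lt_or_ge K 0 with hK | hK
    · have hDK := hD hK
      have hs : 0 < Real.sqrt (-K) := Real.sqrt_pos.2 (by linarith)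
      have h1 : d * Real.sqrt (-K) < Real.pi := (lt_div_iff₀ hs).mp hDK
      have h2 : Real.sqrt (-K) < ω := by
        rw [hω_def, lt_div_iff₀ hd0]; linarith [mul_comm d (Real.sqrt (-K))]
      have h3 : Real.sqrt (-K) ^ 2 < ω ^ 2 := by
        apply pow_lt_pow_left₀ h2 hs.le; norm_num
      rw [Real.sq_sqrt (by linarith : (0:ℝ) ≤ -K)] at h3
      linarith
    · nlinarith [sq_nonneg ω]
  set g : ℝ → ℝ := fun t => Real.sin (ω * (t - z₁)) with hg_def
  set g' : ℝ → ℝ := fun t => ω * Real.cos (ω * (t - z₁)) with hg'_def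
  have hu : ∀ t : ℝ, HasDerivAt (fun s : ℝ => ω * (s - z₁)) ω t := fun t => by
    simpa using ((hasDerivAt_id t).sub_const z₁).const_mul ω
  have hg : ∀ t, HasDerivAt g (g' t) t := fun t => by
    exact ((Real.hasDerivAt_sin (ω * (t - z₁))).comp t (hu t)).congr_deriv (by simp only [hg'_def]; ring : Real.cos (ω * (t - z₁)) * ω = g' t)
  have hg' : ∀ t, HasDerivAt g' (-ω ^ 2 * g t) t := fun t => by
    have := ((Real.hasDerivAt_cos (ω * (t - z₁))).comp t (hu t)).const_mul ω
    exact this.congr_deriv (by simp only [g]; ring)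
  set W : ℝ → ℝ := fun t => h t * g' t - h' t * g t with hW_def
  have hW : ∀ t ∈ Icc z₁ z₂, HasDerivAt W ((-ω ^ 2 - K) * (h t * g t)) t := by
    intro t ht
    have H1 := (hd1 t ht).mul (hg' t)
    have H2 := (hd2 t ht).mul (hg t)
    exact (H1.sub H2).congr_deriv (by ring)
  have hgz₁ : g z₁ = 0 := by simp [g]
  have hgz₂ : g z₂ = 0 := by
    have : ω * (z₂ - z₁) = Real.pi := by
      rw [hω_def, ← hd_def, div_mul_cancel₀ _ hd0.ne']
    simp [g, this]
  have hWz₁ : W z₁ = 0 := by simp [W, hz1, hgz₁]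
  have hWz₂ : W z₂ = 0 := by simp [W, hz2, hgz₂]
  have hcont : ContinuousOn (fun t => (-ω ^ 2 - K) * (h t * g t)) (Icc z₁ z₂) := by
    apply ContinuousOn.mul continuousOn_const
    apply ContinuousOn.mul
    · exact fun t ht => (hd1 t ht).continuousAt.continuousWithinAt
    · exact (Real.continuous_sin.comp (by continuity)).continuousOn
  have hint : IntervalIntegrable (fun t => (-ω ^ 2 - K) * (h t * g t)) volume z₁ z₂ := by
    apply ContinuousOn.intervalIntegrable
    rwa [uIcc_of_le hz.le]
  have hftc := intervalIntegral.integral_eq_sub_of_hasDerivAt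
    (f := W) (fun t ht => hW t (by rwa [uIcc_of_le hz.le] at ht)) hint
  rw [hWz₁, hWz₂, sub_zero] at hftc
  have hpos : 0 < ∫ t in z₁..z₂, (-ω ^ 2 - K) * (h t * g t) := by
    apply intervalIntegral.intervalIntegral_pos_of_pos_on hint _ hz
    intro s hs
    have hgpos : 0 < g s := by
      apply Real.sin_pos_of_pos_of_lt_pi
      · exact mul_pos hω (sub_pos.2 hs.1)
      · have : ω * (s - z₁) < ω * d := by
          apply mul_lt_mul_of_pos_left _ hω
          simp only [hd_def]; linarith [hs.2]
        rw [hω_def, div_mul_cancel₀ _ hd0.ne'] at this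
        exact this
    exact mul_pos_of_neg_of_neg hc (mul_neg_of_neg_of_pos (hneg s hs) hgpos)
  rw [hftc] at hpos
  linarith

lemma exists_zeros (h : ℝ → ℝ) {p q r : ℝ} (hpq : p ≤ q) (hqr : q ≤ r)
    (hcont : ContinuousOn h (Icc p r))
    (hp : 0 ≤ h p) (hq : h q < 0) (hr : 0 ≤ h r) :
    ∃ z₁ z₂, p ≤ z₁ ∧ z₁ < z₂ ∧ z₂ ≤ r ∧ h z₁ = 0 ∧ h z₂ = 0 ∧
      ∀ s ∈ Ioo z₁ z₂, h s < 0 := by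
  have hc1 : ContinuousOn h (Icc p q) := hcont.mono (Icc_subset_Icc le_rfl hqr)
  have hc2 : ContinuousOn h (Icc q r) := hcont.mono (Icc_subset_Icc hpq le_rfl)
  set S₁ : Set ℝ := Icc p q ∩ h ⁻¹' {0} with hS₁
  set S₂ : Set ℝ := Icc q r ∩ h ⁻¹' {0} with hS₂
  have hS₁ne : S₁.Nonempty := by
    have : (0:ℝ) ∈ Icc (h q) (h p) := ⟨hq.le, hp⟩
    obtain ⟨s, hs, hs0⟩ := intermediate_value_Icc' hpq hc1 this
    exact ⟨s, hs, hs0⟩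
  have hS₂ne : S₂.Nonempty := by
    have : (0:ℝ) ∈ Icc (h q) (h r) := ⟨hq.le, hr⟩
    obtain ⟨s, hs, hs0⟩ := intermediate_value_Icc hqr hc2 this
    exact ⟨s, hs, hs0⟩
  have hS₁cl : IsClosed S₁ := hc1.preimage_isClosed_of_isClosed isClosed_Icc isClosed_singleton
  have hS₂cl : IsClosed S₂ := hc2.preimage_isClosed_of_isClosed isClosed_Icc isClosed_singleton
  have hS₁bdd : BddAbove S₁ := (bddAbove_Icc (a := p) (b := q)).mono inter_subset_left
  have hS₂bdd : BddBelow S₂ := (bddBelow_Icc (a := r) (b := q)).mono inter_subset_left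
  set z₁ := sSup S₁ with hz₁def
  set z₂ := sInf S₂ with hz₂def
  have hz₁S : z₁ ∈ S₁ := hS₁cl.csSup_mem hS₁ne hS₁bdd
  have hz₂S : z₂ ∈ S₂ := hS₂cl.csInf_mem hS₂ne hS₂bdd
  have hhz₁ : h z₁ = 0 := hz₁S.2
  have hhz₂ : h z₂ = 0 := hz₂S.2
  have hz₁q : z₁ < q := lt_of_le_of_ne hz₁S.1.2 (fun e => hq.ne (by rw [← e]; exact hhz₁))
  have hz₂q : q < z₂ := lt_of_le_of_ne hz₂S.1.1 (fun e => hq.ne (by rw [e]; exact hhz₂))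
  refine ⟨z₁, z₂, hz₁S.1.1, hz₁q.trans hz₂q, hz₂S.1.2, hhz₁, hhz₂, ?_⟩
  intro s hs
  by_contra hcon
  push_neg at hcon
  rcases le_total s q with hsq | hqs
  · have h0 : (0:ℝ) ∈ Icc (h q) (h s) := ⟨hq.le, hcon⟩
    obtain ⟨u, hu, hu0⟩ := intermediate_value_Icc' hsq
      (hc1.mono (Icc_subset_Icc (hz₁S.1.1.trans hs.1.le) le_rfl)) h0
    have huS : u ∈ S₁ := ⟨⟨hz₁S.1.1.trans (hs.1.le.trans hu.1), hu.2⟩, hu0⟩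
    have := le_csSup hS₁bdd huS
    linarith [hs.1, hu.1]
  · have h0 : (0:ℝ) ∈ Icc (h q) (h s) := ⟨hq.le, hcon⟩
    obtain ⟨u, hu, hu0⟩ := intermediate_value_Icc hqs
      (hc2.mono (Icc_subset_Icc le_rfl (hs.2.le.trans hz₂S.1.2))) h0
    have huS : u ∈ S₂ := ⟨⟨hu.1, hu.2.trans (hs.2.le.trans hz₂S.1.2)⟩, hu0⟩
    have := csInf_le hS₂bdd huS
    linarith [hs.2, hu.2]

/-- If `f₁, f₂` solve `f'' - K f = λ` on `(a, b)`, `t₁ < t₂`, `f₁ t₁ > f₂ t₁`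
and `f₁ t₂ < f₂ t₂`, then `f₁ < f₂` on `(t₂, min(b, t₁ + D_K))` and `f₁ > f₂` on
`(max(a, t₂ - D_K), t₁)`. -/
theorem solutions_comparison_crossing
    (K lam a b t₁ t₂ : ℝ) (f₁ f₂ : ℝ → ℝ)
    (h1 : IsSolOn K lam f₁ (Set.Ioo a b)) (h2 : IsSolOn K lam f₂ (Set.Ioo a b))
    (ht₁ : t₁ ∈ Set.Ioo a b) (ht₂ : t₂ ∈ Set.Ioo a b) (h12 : t₁ < t₂)
    (hgt : f₂ t₁ < f₁ t₁) (hlt : f₁ t₂ < f₂ t₂) :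
    (∀ t, t₂ < t → t < b → LtDK K (t - t₁) → f₁ t < f₂ t) ∧
    (∀ t, a < t → t < t₁ → LtDK K (t₂ - t) → f₂ t < f₁ t) := by
  obtain ⟨ha₁, hb₁⟩ := ht₁
  obtain ⟨ha₂, hb₂⟩ := ht₂
  have hh1 : ∀ s ∈ Ioo a b,
      HasDerivAt (fun u => f₁ u - f₂ u) (deriv f₁ s - deriv f₂ s) s :=
    fun s hs => ((h1 s hs).1.hasDerivAt).sub ((h2 s hs).1.hasDerivAt)
  have hh2 : ∀ s ∈ Ioo a b,
      HasDerivAt (fun u => deriv f₁ u - deriv f₂ u) (K * (f₁ s - f₂ s)) s := by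
    intro s hs
    have := ((h1 s hs).2).sub ((h2 s hs).2)
    exact this.congr_deriv (by ring)
  have hh1' : ∀ s ∈ Ioo a b,
      HasDerivAt (fun u => f₂ u - f₁ u) (deriv f₂ s - deriv f₁ s) s :=
    fun s hs => ((h2 s hs).1.hasDerivAt).sub ((h1 s hs).1.hasDerivAt)
  have hh2' : ∀ s ∈ Ioo a b,
      HasDerivAt (fun u => deriv f₂ u - deriv f₁ u) (K * (f₂ s - f₁ s)) s := by
    intro s hs
    have := ((h2 s hs).2).sub ((h1 s hs).2)
    exact this.congr_deriv (by ring)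
  constructor
  · intro t h2t htb hDK
    by_contra hcon
    push_neg at hcon
    have hcont : ContinuousOn (fun u => f₁ u - f₂ u) (Icc t₁ t) := fun s hs =>
      ((hh1 s ⟨lt_of_lt_of_le ha₁ hs.1,
        lt_of_le_of_lt hs.2 htb⟩).differentiableAt.continuousAt).continuousWithinAt
    obtain ⟨z₁, z₂, hpz, hzz, hzr, hz1, hz2, hneg⟩ :=
      exists_zeros (fun u => f₁ u - f₂ u) h12.le h2t.le hcont
        (sub_nonneg.2 hgt.le) (sub_neg.2 hlt) (sub_nonneg.2 hcon)
    have hsub : Icc z₁ z₂ ⊆ Ioo a b := fun s hs =>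
      ⟨lt_of_lt_of_le ha₁ (hpz.trans hs.1), lt_of_le_of_lt (hs.2.trans hzr) htb⟩
    exact sturm K z₁ z₂ _ _ hzz
      (fun hK => by have := hDK hK; linarith)
      (fun s hs => hh1 s (hsub hs)) (fun s hs => hh2 s (hsub hs)) hz1 hz2 hneg
  · intro t hat htt₁ hDK
    by_contra hcon
    push_neg at hcon
    have hcont : ContinuousOn (fun u => f₂ u - f₁ u) (Icc t t₂) := fun s hs =>
      ((hh1' s ⟨lt_of_lt_of_le hat hs.1,
        lt_of_le_of_lt hs.2 hb₂⟩).differentiableAt.continuousAt).continuousWithinAt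
    obtain ⟨z₁, z₂, hpz, hzz, hzr, hz1, hz2, hneg⟩ :=
      exists_zeros (fun u => f₂ u - f₁ u) htt₁.le h12.le hcont
        (sub_nonneg.2 hcon) (sub_neg.2 hgt) (sub_nonneg.2 hlt.le)
    have hsub : Icc z₁ z₂ ⊆ Ioo a b := fun s hs =>
      ⟨lt_of_lt_of_le hat (hpz.trans hs.1), lt_of_le_of_lt (hs.2.trans hzr) hb₂⟩
    exact sturm K z₁ z₂ _ _ hzz
      (fun hK => by have := hDK hK; linarith)
      (fun s hs => hh1' s (hsub hs)) (fun s hs => hh2' s (hsub hs)) hz1 hz2 hneg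
end

section
/- Let K, λ ∈ ℝ, let I ⊆ ℝ be an open interval, let f : I → ℝ be continuous, and let t₁ < t₂ < t₃ < t₄ be points of I with t₄ − t₁ < D_K. If f satisfies the Jensen subsolution inequality for the parameters (t₁, t₂, t₃) and for the parameters (t₂, t₃, t₄), then f also satisfies the Jensen subsolution inequality for the parameters (t₁, t₂, t₄) and for the parameters (t₁, t₃, t₄). -/
open Set MeasureTheory

noncomputable def snK (K x : ℝ) : ℝ :=
  if K < 0 then Real.sin (Real.sqrt (-K) * x) / Real.sqrt (-K)
  else if K = 0 then x
  else Real.sinh (Real.sqrt K * x) / Real.sqrt K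

noncomputable def csK (K x : ℝ) : ℝ :=
  if K < 0 then Real.cos (Real.sqrt (-K) * x)
  else if K = 0 then 1
  else Real.cosh (Real.sqrt K * x)

lemma snK_zero (K : ℝ) : snK K 0 = 0 := by
  unfold snK
  rcases lt_trichotomy K 0 with hK | hK | hK
  · simp [hK]
  · simp [hK]
  · simp [not_lt.mpr hK.le, hK.ne']

lemma snK_neg (K x : ℝ) : snK K (-x) = - snK K x := by
  unfold snK
  rcases lt_trichotomy K 0 with hK | hK | hK
  · simp [hK, mul_neg, Real.sin_neg, neg_div]
  · simp [hK]
  · simp [not_lt.mpr hK.le, hK.ne', mul_neg, Real.sinh_neg, neg_div]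

lemma snK_pos (K x : ℝ) (hx : 0 < x) (hDK : LtDK K x) : 0 < snK K x := by
  unfold snK
  rcases lt_trichotomy K 0 with hK | hK | hK
  · have hω : 0 < Real.sqrt (-K) := Real.sqrt_pos.mpr (by linarith)
    simp only [if_pos hK]
    apply div_pos _ hω
    apply Real.sin_pos_of_pos_of_lt_pi (by positivity)
    have := hDK hK
    calc Real.sqrt (-K) * x < Real.sqrt (-K) * (Real.pi / Real.sqrt (-K)) := by
          exact mul_lt_mul_of_pos_left this hω
      _ = Real.pi := by field_simp
  · simp [hK, hx]
  · have hω : 0 < Real.sqrt K := Real.sqrt_pos.mpr hK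
    simp only [if_neg (not_lt.mpr hK.le), if_neg hK.ne']
    exact div_pos (Real.sinh_pos_iff.mpr (by positivity)) hω

lemma snK_hasDerivAt (K x : ℝ) : HasDerivAt (snK K) (csK K x) x := by
  unfold snK csK
  rcases lt_trichotomy K 0 with hK | hK | hK
  · have hω : 0 < Real.sqrt (-K) := Real.sqrt_pos.mpr (by linarith)
    simp only [if_pos hK]
    have h1 : HasDerivAt (fun y : ℝ => Real.sqrt (-K) * y) (Real.sqrt (-K)) x := by
      simpa using (hasDerivAt_id x).const_mul (Real.sqrt (-K))
    have h2 := ((Real.hasDerivAt_sin (Real.sqrt (-K) * x)).comp x h1).div_const (Real.sqrt (-K))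
    refine h2.congr_deriv (Eq.symm ?_)
    field_simp
  · subst hK
    simp only [lt_irrefl, if_neg, if_pos rfl, if_false]
    exact hasDerivAt_id x
  · have hω : 0 < Real.sqrt K := Real.sqrt_pos.mpr hK
    simp only [if_neg (not_lt.mpr hK.le), if_neg hK.ne']
    have h1 : HasDerivAt (fun y : ℝ => Real.sqrt K * y) (Real.sqrt K) x := by
      simpa using (hasDerivAt_id x).const_mul (Real.sqrt K)
    have h2 := ((Real.hasDerivAt_sinh (Real.sqrt K * x)).comp x h1).div_const (Real.sqrt K)
    refine h2.congr_deriv (Eq.symm ?_)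
    field_simp

lemma csK_hasDerivAt (K x : ℝ) : HasDerivAt (csK K) (K * snK K x) x := by
  unfold snK csK
  rcases lt_trichotomy K 0 with hK | hK | hK
  · have hω : 0 < Real.sqrt (-K) := Real.sqrt_pos.mpr (by linarith)
    have hω2 : Real.sqrt (-K) * Real.sqrt (-K) = -K := Real.mul_self_sqrt (by linarith)
    simp only [if_pos hK]
    have h1 : HasDerivAt (fun y : ℝ => Real.sqrt (-K) * y) (Real.sqrt (-K)) x := by
      simpa using (hasDerivAt_id x).const_mul (Real.sqrt (-K))
    have h2 := (Real.hasDerivAt_cos (Real.sqrt (-K) * x)).comp x h1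
    refine h2.congr_deriv (Eq.symm ?_)
    field_simp
    linear_combination Real.sin (Real.sqrt (-K) * x) * hω2
  · subst hK
    simp only [lt_irrefl, if_neg, if_pos rfl, if_false, zero_mul]
    simpa using hasDerivAt_const x (1:ℝ)
  · have hω : 0 < Real.sqrt K := Real.sqrt_pos.mpr hK
    have hω2 : Real.sqrt K * Real.sqrt K = K := Real.mul_self_sqrt hK.le
    simp only [if_neg (not_lt.mpr hK.le), if_neg hK.ne']
    have h1 : HasDerivAt (fun y : ℝ => Real.sqrt K * y) (Real.sqrt K) x := by
      simpa using (hasDerivAt_id x).const_mul (Real.sqrt K)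
    have h2 := (Real.hasDerivAt_cosh (Real.sqrt K * x)).comp x h1
    refine h2.congr_deriv (Eq.symm ?_)
    field_simp
    linear_combination (- Real.sinh (Real.sqrt K * x)) * hω2

lemma snK_add (K p q : ℝ) :
    snK K (p + q) = snK K p * csK K q + csK K p * snK K q := by
  unfold snK csK
  rcases lt_trichotomy K 0 with hK | hK | hK
  · have hω : 0 < Real.sqrt (-K) := Real.sqrt_pos.mpr (by linarith)
    simp only [if_pos hK, mul_add, Real.sin_add]
    field_simp
    try ring
  · simp [hK]
  · have hω : 0 < Real.sqrt K := Real.sqrt_pos.mpr hK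
    simp only [if_neg (not_lt.mpr hK.le), if_neg hK.ne', mul_add, Real.sinh_add]
    field_simp
    try ring

lemma csK_add (K p q : ℝ) :
    csK K (p + q) = csK K p * csK K q + K * (snK K p * snK K q) := by
  unfold snK csK
  rcases lt_trichotomy K 0 with hK | hK | hK
  · have hω : 0 < Real.sqrt (-K) := Real.sqrt_pos.mpr (by linarith)
    have hω2 : Real.sqrt (-K) * Real.sqrt (-K) = -K := Real.mul_self_sqrt (by linarith)
    simp only [if_pos hK, mul_add, Real.cos_add]
    field_simp
    linear_combination (- Real.sin (Real.sqrt (-K) * p) * Real.sin (Real.sqrt (-K) * q)) * hω2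
  · simp [hK]
  · have hω : 0 < Real.sqrt K := Real.sqrt_pos.mpr hK
    have hω2 : Real.sqrt K * Real.sqrt K = K := Real.mul_self_sqrt hK.le
    simp only [if_neg (not_lt.mpr hK.le), if_neg hK.ne', mul_add, Real.cosh_add]
    field_simp
    try linear_combination (Real.sinh (Real.sqrt K * p) * Real.sinh (Real.sqrt K * q)) * hω2

lemma csK_sq (K q : ℝ) : csK K q ^ 2 = 1 + K * snK K q ^ 2 := by
  unfold snK csK
  rcases lt_trichotomy K 0 with hK | hK | hK
  · have hω : 0 < Real.sqrt (-K) := Real.sqrt_pos.mpr (by linarith)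
    have hω2 : Real.sqrt (-K) * Real.sqrt (-K) = -K := Real.mul_self_sqrt (by linarith)
    simp only [if_pos hK]
    have h := Real.sin_sq_add_cos_sq (Real.sqrt (-K) * q)
    field_simp
    linear_combination (Real.sqrt (-K) * Real.sqrt (-K)) * h + (- Real.sin (Real.sqrt (-K) * q)^2) * hω2
  · simp [hK]
  · have hω : 0 < Real.sqrt K := Real.sqrt_pos.mpr hK
    have hω2 : Real.sqrt K * Real.sqrt K = K := Real.mul_self_sqrt hK.le
    simp only [if_neg (not_lt.mpr hK.le), if_neg hK.ne']
    have h := Real.cosh_sq_sub_sinh_sq (Real.sqrt K * q)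
    field_simp
    linear_combination (2 * (Real.sqrt K * Real.sqrt K) - K) * h + (2 * Real.sinh (Real.sqrt K * q)^2 + 1 - Real.cosh (Real.sqrt K * q)^2) * hω2

lemma snK_key (K p q r : ℝ) :
    snK K (p + q) * snK K (q + r) = snK K p * snK K r + snK K q * snK K (p + q + r) := by
  rw [show p + q + r = (p + q) + r from by ring, snK_add K (p+q) r,
    snK_add K p q, snK_add K q r, csK_add K p q]
  linear_combination (snK K p * snK K r) * (csK_sq K q)

lemma snK_shift_hasDerivAt (K c x : ℝ) :
    HasDerivAt (fun t => snK K (t - c)) (csK K (x - c)) x := by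
  exact ((snK_hasDerivAt K (x - c)).comp x ((hasDerivAt_id x).sub_const c)).congr_deriv (mul_one _)

lemma csK_shift_hasDerivAt (K c x : ℝ) :
    HasDerivAt (fun t => csK K (t - c)) (K * snK K (x - c)) x := by
  exact ((csK_hasDerivAt K (x - c)).comp x ((hasDerivAt_id x).sub_const c)).congr_deriv (mul_one _)

lemma isSol_add_sn (K lam C c : ℝ) (g : ℝ → ℝ) (hg : IsSol K lam g) :
    IsSol K lam (fun t => g t + C * snK K (t - c)) := by
  obtain ⟨hg1, hg2⟩ := hg
  have hderiv : deriv (fun t => g t + C * snK K (t - c))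
      = fun t => deriv g t + C * csK K (t - c) := by
    funext t
    exact (((hg1 t).hasDerivAt).add ((snK_shift_hasDerivAt K c t).const_mul C)).deriv
  constructor
  · exact fun t => ((hg1 t).hasDerivAt.add ((snK_shift_hasDerivAt K c t).const_mul C)).differentiableAt
  · intro t
    rw [hderiv]
    have := (hg2 t).add ((csK_shift_hasDerivAt K c t).const_mul C)
    refine this.congr_deriv (Eq.symm ?_)
    ring
/-- Splitting Jensen, subsolutions: if a continuous `f` on an open interval
satisfies the Jensen subsolution inequality for `(t₁, t₂, t₃)` and `(t₂, t₃, t₄)`, where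
`t₁ < t₂ < t₃ < t₄` and `t₄ - t₁ < D_K`, then it satisfies it for `(t₁, t₂, t₄)` and
`(t₁, t₃, t₄)`. -/
theorem splitting_jensen_sub
    (K lam : ℝ) (I : Set ℝ) (hIopen : IsOpen I) (hIinterval : I.OrdConnected)
    (f : ℝ → ℝ) (hf : ContinuousOn f I)
    (t₁ t₂ t₃ t₄ : ℝ) (ht₁ : t₁ ∈ I) (ht₂ : t₂ ∈ I) (ht₃ : t₃ ∈ I) (ht₄ : t₄ ∈ I)
    (h12 : t₁ < t₂) (h23 : t₂ < t₃) (h34 : t₃ < t₄) (hD : LtDK K (t₄ - t₁))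
    (hA : JensenSubIneq K lam f t₁ t₂ t₃) (hB : JensenSubIneq K lam f t₂ t₃ t₄) :
    JensenSubIneq K lam f t₁ t₂ t₄ ∧ JensenSubIneq K lam f t₁ t₃ t₄ := by
  have s21 : 0 < snK K (t₂ - t₁) :=
    snK_pos K _ (by linarith) (fun hK => by have := hD hK; linarith)
  have s31 : 0 < snK K (t₃ - t₁) :=
    snK_pos K _ (by linarith) (fun hK => by have := hD hK; linarith)
  have s41 : 0 < snK K (t₄ - t₁) :=
    snK_pos K _ (by linarith) (fun hK => by have := hD hK; linarith)
  have s42 : 0 < snK K (t₄ - t₂) :=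
    snK_pos K _ (by linarith) (fun hK => by have := hD hK; linarith)
  have s43 : 0 < snK K (t₄ - t₃) :=
    snK_pos K _ (by linarith) (fun hK => by have := hD hK; linarith)
  have s32 : 0 < snK K (t₃ - t₂) :=
    snK_pos K _ (by linarith) (fun hK => by have := hD hK; linarith)
  have key := snK_key K (t₂ - t₁) (t₃ - t₂) (t₄ - t₃)
  rw [show t₂ - t₁ + (t₃ - t₂) + (t₄ - t₃) = t₄ - t₁ from by ring,
      show t₂ - t₁ + (t₃ - t₂) = t₃ - t₁ from by ring,
      show t₃ - t₂ + (t₄ - t₃) = t₄ - t₂ from by ring] at key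
  have main : ∀ g : ℝ → ℝ, IsSol K lam g → g t₁ = f t₁ → g t₄ = f t₄ →
      f t₂ ≤ g t₂ ∧ f t₃ ≤ g t₃ := by
    intro g hg hg1 hg4
    set a := f t₂ - g t₂ with ha_def
    set b := f t₃ - g t₃ with hb_def
    -- comparison solution for hA : matches f at t₁ and t₃
    have hk := isSol_add_sn K lam (b / snK K (t₃ - t₁)) t₁ g hg
    have hk1 : (fun t => g t + b / snK K (t₃ - t₁) * snK K (t - t₁)) t₁ = f t₁ := by
      simp [snK_zero, hg1]
    have hk3 : (fun t => g t + b / snK K (t₃ - t₁) * snK K (t - t₁)) t₃ = f t₃ := by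
      simp only
      rw [div_mul_cancel₀ _ s31.ne']
      simp [hb_def]
    have hA' := hA _ hk hk1 hk3
    have h1 : a * snK K (t₃ - t₁) ≤ b * snK K (t₂ - t₁) := by
      have h0 : a ≤ b / snK K (t₃ - t₁) * snK K (t₂ - t₁) := by linarith
      calc a * snK K (t₃ - t₁)
          ≤ (b / snK K (t₃ - t₁) * snK K (t₂ - t₁)) * snK K (t₃ - t₁) :=
            mul_le_mul_of_nonneg_right h0 s31.le
        _ = b * snK K (t₂ - t₁) := by field_simp
    -- comparison solution for hB : matches f at t₂ and t₄
    have hsn24 : snK K (t₂ - t₄) = - snK K (t₄ - t₂) := by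
      rw [show t₂ - t₄ = -(t₄ - t₂) from by ring, snK_neg]
    have hsn34 : snK K (t₃ - t₄) = - snK K (t₄ - t₃) := by
      rw [show t₃ - t₄ = -(t₄ - t₃) from by ring, snK_neg]
    have hh := isSol_add_sn K lam (- a / snK K (t₄ - t₂)) t₄ g hg
    have hh4 : (fun t => g t + (- a) / snK K (t₄ - t₂) * snK K (t - t₄)) t₄ = f t₄ := by
      simp [snK_zero, hg4]
    have hh2 : (fun t => g t + (- a) / snK K (t₄ - t₂) * snK K (t - t₄)) t₂ = f t₂ := by
      simp only [hsn24]
      rw [mul_neg, div_mul_cancel₀ _ s42.ne']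
      simp [ha_def]
    have hB' := hB _ hh hh2 hh4
    simp only [hsn34] at hB'
    have h2 : b * snK K (t₄ - t₂) ≤ a * snK K (t₄ - t₃) := by
      have h0 : b ≤ a / snK K (t₄ - t₂) * snK K (t₄ - t₃) := by
        have : (- a) / snK K (t₄ - t₂) * (- snK K (t₄ - t₃))
            = a / snK K (t₄ - t₂) * snK K (t₄ - t₃) := by ring
        rw [this] at hB'
        linarith
      calc b * snK K (t₄ - t₂)
          ≤ (a / snK K (t₄ - t₂) * snK K (t₄ - t₃)) * snK K (t₄ - t₂) :=
            mul_le_mul_of_nonneg_right h0 s42.le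
        _ = a * snK K (t₄ - t₃) := by field_simp
    have ha : a ≤ 0 := by
      by_contra hcon
      push_neg at hcon
      have hb : 0 < b := by nlinarith
      nlinarith [mul_le_mul_of_nonneg_right h1 s42.le,
        mul_le_mul_of_nonneg_left h2 s21.le,
        mul_pos (mul_pos hcon s32) s41]
    have hb : b ≤ 0 := by
      by_contra hcon
      push_neg at hcon
      nlinarith [mul_pos hcon s42, mul_nonneg (neg_nonneg.mpr ha) s43.le]
    exact ⟨by linarith, by linarith⟩
  exact ⟨fun g hg e1 e4 => (main g hg e1 e4).1, fun g hg e1 e4 => (main g hg e1 e4).2⟩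
end
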